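/- For all real numbers φ > 3/2 and γ ≥ 0, the weighted sum M(γ, φ, n) satisfies M(γ, φ, n) = Θ(n). -/
import Mathlib


/-- `f(n) = Θ(h(n))`: there exist constants `0 < c₁ ≤ c₂` and `N₀` such that
`c₁·h(n) ≤ f(n) ≤ c₂·h(n)` for all integers `n ≥ N₀`. -/
def IsBigTheta (f h : ℕ → ℝ) : Prop :=
  ∃ c₁ c₂ : ℝ, 0 < c₁ ∧ c₁ ≤ c₂ ∧ ∃ N₀ : ℕ, ∀ n : ℕ, N₀ ≤ n →
    c₁ * h n ≤ f n ∧ f n ≤ c₂ * h n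

/-- Zipf normalization `Z(γ, n) = Σ_{j=1}^{n−1} j^{−γ}`. -/
noncomputable def Z (γ : ℝ) (n : ℕ) : ℝ := ∑ j ∈ Finset.Icc 1 (n - 1), (j : ℝ) ^ (-γ)

/-- `Z_φ(l) = Σ_{m=1}^{l} m^{−φ}`. -/
noncomputable def Zphi (φ : ℝ) (l : ℕ) : ℝ := ∑ m ∈ Finset.Icc 1 l, (m : ℝ) ^ (-φ)

/-- `D_{1/2}(φ, l) = Z_φ(l)⁻¹·Σ_{d=1}^{l} d^{1/2−φ}`. -/
noncomputable def Dhalf (φ : ℝ) (l : ℕ) : ℝ :=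
  (Zphi φ l)⁻¹ * ∑ d ∈ Finset.Icc 1 l, (d : ℝ) ^ (1 / 2 - φ)

/-- `M(γ, φ, n) = n·Z(γ, n)⁻¹·Σ_{l=1}^{n−1} l^{−γ}·D_{1/2}(φ, l)`. -/
noncomputable def M (γ φ : ℝ) (n : ℕ) : ℝ :=
  n * (Z γ n)⁻¹ * ∑ l ∈ Finset.Icc 1 (n - 1), (l : ℝ) ^ (-γ) * Dhalf φ l

theorem weighted_sqrt_sum_linear_order (γ φ : ℝ) (hγ : 0 ≤ γ) (hφ : 3 / 2 < φ) :
    IsBigTheta (fun n => M γ φ n) (fun n => (n : ℝ)) := by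
  have hφ1 : (-φ) < -1 := by linarith
  have hφ2 : (1 / 2 - φ) < -1 := by linarith
  have hs1 : Summable (fun m : ℕ => (m : ℝ) ^ (-φ)) := Real.summable_nat_rpow.2 hφ1
  have hs2 : Summable (fun m : ℕ => (m : ℝ) ^ (1 / 2 - φ)) := Real.summable_nat_rpow.2 hφ2
  set K : ℝ := ∑' m : ℕ, (m : ℝ) ^ (-φ) with hKdef
  set K' : ℝ := ∑' m : ℕ, (m : ℝ) ^ (1 / 2 - φ) with hK'def
  have hnonneg1 : ∀ m : ℕ, 0 ≤ (m : ℝ) ^ (-φ) := fun m => Real.rpow_nonneg (Nat.cast_nonneg m) _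
  have hnonneg2 : ∀ m : ℕ, 0 ≤ (m : ℝ) ^ (1 / 2 - φ) :=
    fun m => Real.rpow_nonneg (Nat.cast_nonneg m) _
  have hZphi_le : ∀ l : ℕ, Zphi φ l ≤ K := fun l =>
    Summable.sum_le_tsum _ (fun i _ => hnonneg1 i) hs1
  have hZphi_ge : ∀ l : ℕ, 1 ≤ l → 1 ≤ Zphi φ l := by
    intro l hl
    have h1 : ((1 : ℕ) : ℝ) ^ (-φ) ≤ Zphi φ l := by
      apply Finset.single_le_sum (f := fun m : ℕ => (m : ℝ) ^ (-φ)) (fun i _ => hnonneg1 i)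
      simp [Finset.mem_Icc, hl]
    simpa using h1
  have hS_le : ∀ l : ℕ, ∑ d ∈ Finset.Icc 1 l, (d : ℝ) ^ (1 / 2 - φ) ≤ K' := fun l =>
    Summable.sum_le_tsum _ (fun i _ => hnonneg2 i) hs2
  have hS_ge : ∀ l : ℕ, 1 ≤ l → 1 ≤ ∑ d ∈ Finset.Icc 1 l, (d : ℝ) ^ (1 / 2 - φ) := by
    intro l hl
    have h1 : ((1 : ℕ) : ℝ) ^ (1 / 2 - φ) ≤ ∑ d ∈ Finset.Icc 1 l, (d : ℝ) ^ (1 / 2 - φ) := by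
      apply Finset.single_le_sum (f := fun m : ℕ => (m : ℝ) ^ (1 / 2 - φ)) (fun i _ => hnonneg2 i)
      simp [Finset.mem_Icc, hl]
    simpa using h1
  have hK1 : 1 ≤ K := le_trans (hZphi_ge 1 le_rfl) (hZphi_le 1)
  have hK'1 : 1 ≤ K' := le_trans (hS_ge 1 le_rfl) (hS_le 1)
  have hKpos : 0 < K := by linarith
  -- bounds on Dhalf
  have hD_lb : ∀ l : ℕ, 1 ≤ l → K⁻¹ ≤ Dhalf φ l := by
    intro l hl
    have hZpos : 0 < Zphi φ l := lt_of_lt_of_le one_pos (hZphi_ge l hl)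
    have hinv : K⁻¹ ≤ (Zphi φ l)⁻¹ := inv_anti₀ hZpos (hZphi_le l)
    calc K⁻¹ = K⁻¹ * 1 := (mul_one _).symm
      _ ≤ (Zphi φ l)⁻¹ * ∑ d ∈ Finset.Icc 1 l, (d : ℝ) ^ (1 / 2 - φ) := by
          apply mul_le_mul hinv (hS_ge l hl) zero_le_one (le_of_lt (inv_pos.2 hZpos))
      _ = Dhalf φ l := rfl
  have hD_ub : ∀ l : ℕ, 1 ≤ l → Dhalf φ l ≤ K' := by
    intro l hl
    have hZpos : 0 < Zphi φ l := lt_of_lt_of_le one_pos (hZphi_ge l hl)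
    have hinv : (Zphi φ l)⁻¹ ≤ 1 := inv_le_one_of_one_le₀ (hZphi_ge l hl)
    have hSnn : 0 ≤ ∑ d ∈ Finset.Icc 1 l, (d : ℝ) ^ (1 / 2 - φ) :=
      Finset.sum_nonneg fun i _ => hnonneg2 i
    calc Dhalf φ l = (Zphi φ l)⁻¹ * ∑ d ∈ Finset.Icc 1 l, (d : ℝ) ^ (1 / 2 - φ) := rfl
      _ ≤ 1 * K' := mul_le_mul hinv (hS_le l) hSnn zero_le_one
      _ = K' := one_mul _
  refine ⟨K⁻¹, K', inv_pos.2 hKpos, le_trans (inv_le_one_of_one_le₀ hK1) hK'1, 2, ?_⟩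
  intro n hn
  have hn1 : 1 ≤ n - 1 := by omega
  have hZnn : ∀ l ∈ Finset.Icc 1 (n - 1), 0 < (l : ℝ) ^ (-γ) := by
    intro l hl
    apply Real.rpow_pos_of_pos
    have := (Finset.mem_Icc.1 hl).1
    exact_mod_cast Nat.lt_of_lt_of_le Nat.zero_lt_one this
  have hZpos : 0 < Z γ n := by
    apply Finset.sum_pos hZnn
    exact ⟨1, Finset.mem_Icc.2 ⟨le_rfl, hn1⟩⟩
  have hSum_lb : K⁻¹ * Z γ n ≤ ∑ l ∈ Finset.Icc 1 (n - 1), (l : ℝ) ^ (-γ) * Dhalf φ l := by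
    rw [show K⁻¹ * Z γ n = ∑ l ∈ Finset.Icc 1 (n - 1), (l : ℝ) ^ (-γ) * K⁻¹ by
      rw [Z, Finset.mul_sum]; exact Finset.sum_congr rfl fun _ _ => mul_comm _ _]
    apply Finset.sum_le_sum
    intro i hi
    exact mul_le_mul_of_nonneg_left (hD_lb i (Finset.mem_Icc.1 hi).1) (le_of_lt (hZnn i hi))
  have hSum_ub : ∑ l ∈ Finset.Icc 1 (n - 1), (l : ℝ) ^ (-γ) * Dhalf φ l ≤ K' * Z γ n := by
    rw [show K' * Z γ n = ∑ l ∈ Finset.Icc 1 (n - 1), (l : ℝ) ^ (-γ) * K' by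
      rw [Z, Finset.mul_sum]; exact Finset.sum_congr rfl fun _ _ => mul_comm _ _]
    apply Finset.sum_le_sum
    intro i hi
    exact mul_le_mul_of_nonneg_left (hD_ub i (Finset.mem_Icc.1 hi).1) (le_of_lt (hZnn i hi))
  have hZne : Z γ n ≠ 0 := ne_of_gt hZpos
  have key : ∀ c : ℝ, (n : ℝ) * (Z γ n)⁻¹ * (c * Z γ n) = c * n := by
    intro c
    field_simp
  constructor
  · show K⁻¹ * (n : ℝ) ≤ M γ φ n
    rw [← key K⁻¹]
    simp only [M]
    exact mul_le_mul_of_nonneg_left hSum_lb (by positivity)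
  · show M γ φ n ≤ K' * (n : ℝ)
    rw [← key K']
    simp only [M]
    exact mul_le_mul_of_nonneg_left hSum_ub (by positivity)
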